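/- Let a, w be vectors in d-dimensional Euclidean space ℝ^d with a ≠ 0. Then ‖a+w‖/(1+‖a+w‖) − ‖a‖/(1+‖a‖) − ⟨a,w⟩/(‖a‖(1+‖a‖)²) ≤ min( ‖w‖², 4‖a‖·‖w‖ ) / (2‖a‖(1+‖a‖)²). -/

import Mathlib

/-!
By concavity of `r ↦ r / (1 + r)`, the left-hand side is at most
`(‖a‖ (‖a + w‖ - ‖a‖) - ⟪a, w⟫) / (‖a‖ (1 + ‖a‖)²)`. The numerator is at most `‖w‖² / 2` by AM-GM
`2 ‖a‖ ‖a + w‖ ≤ ‖a‖² + ‖a + w‖²` with `‖a + w‖²` expanded, and at most `2 ‖a‖ ‖w‖` by the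
triangle and Cauchy–Schwarz inequalities.
-/

open RealInnerProductSpace

lemma div_one_add_sub_div_one_add_le {r s : ℝ} (hr : 0 ≤ r) (hs : 0 ≤ s) :
    s / (1 + s) - r / (1 + r) ≤ (s - r) / (1 + r) ^ 2 := by
  rw [div_sub_div _ _ (by positivity) (by positivity),
    div_le_div_iff₀ (by positivity) (by positivity)]
  nlinarith [sq_nonneg (s - r), mul_nonneg hr hs]

section InnerProductSpace

variable {E : Type*} [NormedAddCommGroup E] [InnerProductSpace ℝ E]

lemma norm_mul_norm_add_sub_sub_inner_le_sq_div_two (a w : E) :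
    ‖a‖ * (‖a + w‖ - ‖a‖) - ⟪a, w⟫ ≤ ‖w‖ ^ 2 / 2 := by
  nlinarith [sq_nonneg (‖a + w‖ - ‖a‖), norm_add_sq_real a w]

lemma norm_mul_norm_add_sub_sub_inner_le_two_mul (a w : E) :
    ‖a‖ * (‖a + w‖ - ‖a‖) - ⟪a, w⟫ ≤ 2 * ‖a‖ * ‖w‖ := by
  have h_triangle : ‖a + w‖ - ‖a‖ ≤ ‖w‖ := by linarith [norm_add_le a w]
  have h_cauchySchwarz : -⟪a, w⟫ ≤ ‖a‖ * ‖w‖ :=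
    neg_le.mp (neg_le_of_abs_le (abs_real_inner_le_norm a w))
  nlinarith [mul_le_mul_of_nonneg_left h_triangle (norm_nonneg a)]

lemma norm_mul_norm_add_sub_sub_inner_le_min (a w : E) :
    ‖a‖ * (‖a + w‖ - ‖a‖) - ⟪a, w⟫
      ≤ min (‖w‖ ^ 2) (4 * ‖a‖ * ‖w‖) / 2 := by
  rw [← min_div_div_right zero_le_two]
  refine le_min (norm_mul_norm_add_sub_sub_inner_le_sq_div_two a w) ?_
  linarith [norm_mul_norm_add_sub_sub_inner_le_two_mul a w]

end InnerProductSpace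

/-- Combined jump estimate for `F(r) = r/(1+r)` (eq-F estimate):
for `a ≠ 0`,
`F(‖a+w‖) − F(‖a‖) − ⟨a,w⟩/(‖a‖(1+‖a‖)²) ≤ min(‖w‖², 4‖a‖‖w‖)/(2‖a‖(1+‖a‖)²)`. -/
theorem F_jump_combined
    (d : ℕ) (a w : EuclideanSpace ℝ (Fin d)) (ha : a ≠ 0) :
    ‖a + w‖ / (1 + ‖a + w‖) - ‖a‖ / (1 + ‖a‖)
        - (inner ℝ a w : ℝ) / (‖a‖ * (1 + ‖a‖) ^ 2)
      ≤ min (‖w‖ ^ 2) (4 * ‖a‖ * ‖w‖) / (2 * ‖a‖ * (1 + ‖a‖) ^ 2) := by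
  have hA : 0 < ‖a‖ := norm_pos_iff.mpr ha
  calc _
    _ ≤ (‖a + w‖ - ‖a‖) / (1 + ‖a‖) ^ 2 - ⟪a, w⟫ / (‖a‖ * (1 + ‖a‖) ^ 2) :=
      sub_le_sub_right (div_one_add_sub_div_one_add_le (norm_nonneg _) (norm_nonneg _)) _
    _ = (‖a‖ * (‖a + w‖ - ‖a‖) - ⟪a, w⟫) / (‖a‖ * (1 + ‖a‖) ^ 2) := by
      field_simp
    _ ≤ min (‖w‖ ^ 2) (4 * ‖a‖ * ‖w‖) / 2 / (‖a‖ * (1 + ‖a‖) ^ 2) := by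
      gcongr
      exact norm_mul_norm_add_sub_sub_inner_le_min a w
    _ = min (‖w‖ ^ 2) (4 * ‖a‖ * ‖w‖) / (2 * ‖a‖ * (1 + ‖a‖) ^ 2) := by
      rw [div_div, ← mul_assoc]
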